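/- Fix $\epsilon>0$, $H\in\mathbb{R}$, $\xi>0$, $\rho\in[-1,1]$, $T>0$, and let $f,g:[0,T]\to\mathbb{C}$ be bounded measurable functions with $\Re f=\Re g=0$. Let $\psi_\epsilon:[0,T]\to\mathbb{C}$ be a solution of $\psi_\epsilon'(t)=\epsilon^{H-1/2}\frac{\xi^2}{2}\psi_\epsilon(t)^2+(\epsilon^{H-1/2}\rho\xi f(t)-\epsilon^{-1})\psi_\epsilon(t)+\epsilon^{H-1/2}(g(t)+\frac{f(t)^2-f(t)}{2})$ with $\psi_\epsilon(0)=0$ satisfying $\Re(\psi_\epsilon(t))\le 0$ for all $t\le T$. Then there exists a constant $C$ independent of $\epsilon$ such that $|\psi_\epsilon(t)|\le C\,\epsilon^{H+1/2}(1-e^{-t/\epsilon})$ for all $t\le T$. -/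

import Mathlib

/-!
Since `Re f = 0` and `Re ψ ≤ 0`, the linear term `ρ ξ f ψ` contributes nothing and the quadratic term
only decreases `‖ψ‖`, so `‖ψ‖` obeys `D⁺‖ψ‖ ≤ -ε⁻¹ ‖ψ‖ + ε^(H-1/2) C` with `C` bounding
`g + (f² - f)/2`. Grönwall's inequality with `ψ 0 = 0` gives
`‖ψ t‖ ≤ C ε^(H-1/2) · ε (1 - e^(-t/ε))`.
-/

open Set

open scoped RealInnerProductSpace

section NormGronwall

variable {F : Type*} [NormedAddCommGroup F] [InnerProductSpace ℝ F]

theorem HasDerivAt.norm_of_ne_zero {ψ : ℝ → F} {d : F} {x : ℝ} (h : HasDerivAt ψ d x)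
    (hψ : ψ x ≠ 0) : HasDerivAt (‖ψ ·‖) (⟪ψ x, d⟫ / ‖ψ x‖) x := by
  have hsqrt := (Real.hasDerivAt_sqrt (pow_ne_zero 2 (norm_ne_zero_iff.2 hψ))).comp x h.norm_sq
  simp only [Function.comp_def, Real.sqrt_sq (norm_nonneg _)] at hsqrt
  refine hsqrt.congr_deriv ?_
  field_simp

theorem norm_le_gronwallBound_of_inner_deriv_le {ψ ψ' : ℝ → F} {a b K δ : ℝ}
    (hψ : ∀ t ∈ Icc a b, HasDerivAt ψ (ψ' t) t)
    (hzero : ∀ t ∈ Ico a b, ψ t = 0 → ‖ψ' t‖ ≤ δ)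
    (hinner : ∀ t ∈ Ico a b, ⟪ψ t, ψ' t⟫ ≤ (K * ‖ψ t‖ + δ) * ‖ψ t‖) :
    ∀ t ∈ Icc a b, ‖ψ t‖ ≤ gronwallBound ‖ψ a‖ K δ (t - a) := by
  classical
  apply le_gronwallBound_of_liminf_deriv_right_le
    (f' := fun t => if ψ t = 0 then ‖ψ' t‖ else ⟪ψ t, ψ' t⟫ / ‖ψ t‖)
  · exact fun t ht => (hψ t ht).continuousAt.continuousWithinAt.norm
  · intro t ht r hr
    have hderiv := hψ t (Ico_subset_Icc_self ht)
    by_cases h0 : ψ t = 0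
    · rw [if_pos h0] at hr
      exact hderiv.hasDerivWithinAt.liminf_right_slope_norm_le hr
    · rw [if_neg h0] at hr
      simpa only [slope_def_field, div_eq_inv_mul] using
        (hderiv.norm_of_ne_zero h0).hasDerivWithinAt.liminf_right_slope_le hr
  · exact le_rfl
  · intro t ht
    by_cases h0 : ψ t = 0
    · simpa [h0] using hzero t ht h0
    · rw [if_neg h0, div_le_iff₀ (norm_pos_iff.2 h0)]
      exact hinner t ht

end NormGronwall

theorem Complex.inner_mul_self_right (z w : ℂ) : ⟪z, w * z⟫ = w.re * ‖z‖ ^ 2 := by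
  rw [Complex.inner, mul_assoc, Complex.mul_conj, Complex.re_mul_ofReal, Complex.sq_norm]

theorem inner_riccati_le {a s r x κ B : ℝ} {z f c : ℂ} (ha : 0 ≤ a) (hz : z.re ≤ 0)
    (hf : f.re = 0) (hc : ‖c‖ ≤ B) :
    ⟪z, (a : ℂ) * (s ^ 2 / 2 : ℝ) * z ^ 2 + ((a : ℂ) * r * x * f - κ) * z + a * c⟫
      ≤ (-κ * ‖z‖ + B * a) * ‖z‖ := by
  have hsplit : (a : ℂ) * (s ^ 2 / 2 : ℝ) * z ^ 2 + ((a : ℂ) * r * x * f - κ) * z + a * c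
      = ((a : ℂ) * (s ^ 2 / 2 : ℝ) * z + (a : ℂ) * r * x * f - κ) * z + a * c := by ring
  have hre : ((a : ℂ) * (s ^ 2 / 2 : ℝ) * z + (a : ℂ) * r * x * f - κ).re
      = a * (s ^ 2 / 2) * z.re - κ := by
    simp [Complex.mul_re, hf, -Complex.ofReal_pow]
  have hquad : a * (s ^ 2 / 2) * z.re * ‖z‖ ^ 2 ≤ 0 :=
    mul_nonpos_of_nonpos_of_nonneg (mul_nonpos_of_nonneg_of_nonpos (by positivity) hz)
      (by positivity)
  have hforce : ⟪z, (a : ℂ) * c⟫ ≤ ‖z‖ * (a * B) := by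
    refine (real_inner_le_norm _ _).trans (mul_le_mul_of_nonneg_left ?_ (norm_nonneg _))
    rw [norm_mul, Complex.norm_real, Real.norm_of_nonneg ha]
    exact mul_le_mul_of_nonneg_left hc ha
  rw [hsplit, inner_add_right, Complex.inner_mul_self_right, hre]
  nlinarith

theorem norm_add_sq_sub_div_two_le {f g : ℂ} {M : ℝ} (hf : ‖f‖ ≤ M) (hg : ‖g‖ ≤ M) :
    ‖g + (f ^ 2 - f) / 2‖ ≤ M + (M ^ 2 + M) / 2 := by
  have hquad : ‖f ^ 2 - f‖ ≤ M ^ 2 + M := calc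
    ‖f ^ 2 - f‖ ≤ ‖f‖ ^ 2 + ‖f‖ := by rw [← norm_pow]; exact norm_sub_le _ _
    _ ≤ M ^ 2 + M := add_le_add (pow_le_pow_left₀ (norm_nonneg f) hf 2) hf
  calc ‖g + (f ^ 2 - f) / 2‖ ≤ ‖g‖ + ‖f ^ 2 - f‖ / 2 := by
        rw [← Complex.norm_two, ← norm_div]; exact norm_add_le _ _
    _ ≤ M + (M ^ 2 + M) / 2 := by linarith

theorem gronwallBound_zero_neg_inv {ε : ℝ} (hε : 0 < ε) (H B t : ℝ) :
    gronwallBound 0 (-ε⁻¹) (B * ε ^ (H - 1/2)) t = B * ε ^ (H + 1/2) * (1 - Real.exp (-t / ε)) := by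
  have hpow : ε ^ (H + 1/2) = ε ^ (H - 1/2) * ε := by
    rw [← Real.rpow_add_one hε.ne']
    ring_nf
  rw [gronwallBound_of_K_ne_0 (neg_ne_zero.2 (inv_ne_zero hε.ne')), hpow]
  field_simp
  ring_nf

theorem stmt3 (H ξ ρ T : ℝ) (f g : ℝ → ℂ) (M : ℝ) (hbdd : ∀ t ∈ Icc (0:ℝ) T, ‖f t‖ ≤ M ∧ ‖g t‖ ≤ M)
    (hfre : ∀ t ∈ Icc (0:ℝ) T, (f t).re = 0) :
    ∃ C : ℝ, ∀ ε : ℝ, 0 < ε → ∀ ψ : ℝ → ℂ, ψ 0 = 0 →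
      (∀ t ∈ Icc (0:ℝ) T, HasDerivAt ψ
        (((ε ^ (H - 1/2) : ℝ) : ℂ) * (ξ^2/2 : ℝ) * ψ t ^ 2
          + (((ε ^ (H - 1/2) : ℝ) : ℂ) * (ρ : ℂ) * (ξ : ℂ) * f t - ((ε⁻¹ : ℝ) : ℂ)) * ψ t
          + ((ε ^ (H - 1/2) : ℝ) : ℂ) * (g t + (f t ^ 2 - f t) / 2)) t) →
      (∀ t ∈ Icc (0:ℝ) T, (ψ t).re ≤ 0) →
      ∀ t ∈ Icc (0:ℝ) T, ‖ψ t‖ ≤ C * ε ^ (H + 1/2) * (1 - Real.exp (-t / ε)) := by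
  refine ⟨M + (M ^ 2 + M) / 2, fun ε hε ψ hψ0 hψ hre t ht => ?_⟩
  have hforce : ∀ t ∈ Icc (0:ℝ) T, ‖g t + (f t ^ 2 - f t) / 2‖ ≤ M + (M ^ 2 + M) / 2 :=
    fun t ht => norm_add_sq_sub_div_two_le (hbdd t ht).1 (hbdd t ht).2
  have hεpow : 0 ≤ ε ^ (H - 1/2) := Real.rpow_nonneg hε.le _
  have hgronwall := norm_le_gronwallBound_of_inner_deriv_le (K := -ε⁻¹) hψ
    (fun s hs hs0 => by
      simp only [hs0, ne_eq, OfNat.ofNat_ne_zero, not_false_eq_true, zero_pow, mul_zero, zero_add,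
        norm_mul, Complex.norm_real, Real.norm_of_nonneg hεpow]
      rw [mul_comm]
      exact mul_le_mul_of_nonneg_right (hforce s (Ico_subset_Icc_self hs)) hεpow)
    (fun s hs => inner_riccati_le hεpow (hre s (Ico_subset_Icc_self hs))
      (hfre s (Ico_subset_Icc_self hs)) (hforce s (Ico_subset_Icc_self hs))) t ht
  rwa [hψ0, norm_zero, sub_zero, gronwallBound_zero_neg_inv hε] at hgronwall
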